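/- Let a < b be real numbers and let γ : ℝ × ℝ → ℝ be continuous and symmetric, γ(s,t) = γ(t,s). Define ϖ[(s₁,t₁),(s₂,t₂)] = γ(s₁,s₂)γ(t₁,t₂) + γ(s₁,t₂)γ(s₂,t₁). Then ∫ₐᵇ∫ₐᵇ∫ₐᵇ∫ₐᵇ ϖ[(s₁,t₁),(s₂,t₂)]² ds₁ dt₁ ds₂ dt₂ = 2(∫ₐᵇ∫ₐᵇ γ(s,t)² ds dt)² + 2∫ₐᵇ∫ₐᵇ∫ₐᵇ∫ₐᵇ γ(t,u₁)γ(u₁,u₂)γ(u₂,u₃)γ(u₃,t) du₁ du₂ du₃ dt; that is, tr(ϖ^⊗2) = 2tr²(γ^⊗2) + 2tr(γ^⊗4). -/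
import Mathlib

open MeasureTheory intervalIntegral

lemma myswap {a b : ℝ} (hab : a ≤ b) (f : ℝ → ℝ → ℝ)
    (hf : Continuous fun p : ℝ × ℝ => f p.1 p.2) :
    (∫ x in a..b, ∫ y in a..b, f x y) = ∫ y in a..b, ∫ x in a..b, f x y := by
  simp only [intervalIntegral.integral_of_le hab]
  apply MeasureTheory.integral_integral_swap
  rw [Measure.prod_restrict]
  exact (hf.continuousOn.integrableOn_compact (isCompact_Icc.prod isCompact_Icc)).mono_set
    (Set.prod_mono Set.Ioc_subset_Icc_self Set.Ioc_subset_Icc_self)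

/-- For a continuous symmetric kernel `γ` on `[a,b]²` and
`ϖ[(s₁,t₁),(s₂,t₂)] = γ(s₁,s₂)γ(t₁,t₂) + γ(s₁,t₂)γ(s₂,t₁)`, one has
`tr(ϖ^⊗2) = 2·tr²(γ^⊗2) + 2·tr(γ^⊗4)`. -/
theorem stmt_7 (a b : ℝ) (hab : a < b) (γ : ℝ → ℝ → ℝ)
    (hcont : Continuous (fun p : ℝ × ℝ => γ p.1 p.2))
    (hsym : ∀ s t, γ s t = γ t s)
    (ϖ : ℝ × ℝ → ℝ × ℝ → ℝ)
    (hϖ : ∀ s₁ t₁ s₂ t₂, ϖ (s₁, t₁) (s₂, t₂) = γ s₁ s₂ * γ t₁ t₂ + γ s₁ t₂ * γ s₂ t₁) :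
    (∫ s₁ in a..b, ∫ t₁ in a..b, ∫ s₂ in a..b, ∫ t₂ in a..b, (ϖ (s₁, t₁) (s₂, t₂)) ^ 2) =
      2 * (∫ s in a..b, ∫ t in a..b, (γ s t) ^ 2) ^ 2 +
      2 * ∫ t in a..b, ∫ u₁ in a..b, ∫ u₂ in a..b, ∫ u₃ in a..b,
            γ t u₁ * γ u₁ u₂ * γ u₂ u₃ * γ u₃ t := by
  have hle : a ≤ b := hab.le
  set F : ℝ → ℝ := fun s => ∫ t in a..b, γ s t ^ 2 with hFdef
  set H : ℝ → ℝ → ℝ := fun s t => ∫ u in a..b, γ s u * γ u t with hHdef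
  have eF : ∀ s, (∫ x in a..b, γ s x ^ 2) = F s := fun s => rfl
  have eH : ∀ s t, (∫ x in a..b, γ s x * γ x t) = H s t := fun s t => rfl
  set T : ℝ := ∫ s in a..b, F s with hTdef
  have cF : Continuous F := by
    apply intervalIntegral.continuous_parametric_intervalIntegral_of_continuous'
    show Continuous fun q : ℝ × ℝ => γ q.1 q.2 ^ 2
    fun_prop
  have cH : Continuous fun p : ℝ × ℝ => H p.1 p.2 := by
    apply intervalIntegral.continuous_parametric_intervalIntegral_of_continuous'
    show Continuous fun q : (ℝ × ℝ) × ℝ => γ q.1.1 q.2 * γ q.2 q.1.2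
    fun_prop
  set K : ℝ → ℝ := fun s => ∫ t in a..b, H s t ^ 2 with hKdef
  have cK : Continuous K := by
    apply intervalIntegral.continuous_parametric_intervalIntegral_of_continuous'
    show Continuous fun q : ℝ × ℝ => H q.1 q.2 ^ 2
    fun_prop
  have Hsym : ∀ s t, H s t = H t s := by
    intro s t
    refine intervalIntegral.integral_congr fun u _ => ?_
    rw [hsym s u, hsym u t]; ring
  -- step 1: innermost integral
  have step1 : ∀ s₁ t₁ s₂, (∫ t₂ in a..b, ϖ (s₁, t₁) (s₂, t₂) ^ 2)
      = γ s₁ s₂ ^ 2 * F t₁ + 2 * γ s₁ s₂ * γ s₂ t₁ * H t₁ s₁ + γ s₂ t₁ ^ 2 * F s₁ := by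
    intro s₁ t₁ s₂
    have e : ∀ t₂, ϖ (s₁, t₁) (s₂, t₂) ^ 2
        = γ s₁ s₂ ^ 2 * γ t₁ t₂ ^ 2 + 2 * γ s₁ s₂ * γ s₂ t₁ * (γ t₁ t₂ * γ t₂ s₁)
          + γ s₂ t₁ ^ 2 * γ s₁ t₂ ^ 2 := by
      intro t₂; rw [hϖ, hsym s₁ t₂]; ring
    have iA : IntervalIntegrable (fun t₂ => γ s₁ s₂ ^ 2 * γ t₁ t₂ ^ 2) volume a b :=
      (by fun_prop : Continuous fun t₂ : ℝ => γ s₁ s₂ ^ 2 * γ t₁ t₂ ^ 2).intervalIntegrable a b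
    have iB : IntervalIntegrable
        (fun t₂ => 2 * γ s₁ s₂ * γ s₂ t₁ * (γ t₁ t₂ * γ t₂ s₁)) volume a b :=
      (by fun_prop :
        Continuous fun t₂ : ℝ => 2 * γ s₁ s₂ * γ s₂ t₁ * (γ t₁ t₂ * γ t₂ s₁)).intervalIntegrable a b
    have iC : IntervalIntegrable (fun t₂ => γ s₂ t₁ ^ 2 * γ s₁ t₂ ^ 2) volume a b :=
      (by fun_prop : Continuous fun t₂ : ℝ => γ s₂ t₁ ^ 2 * γ s₁ t₂ ^ 2).intervalIntegrable a b
    simp_rw [e]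
    rw [intervalIntegral.integral_add (iA.add iB) iC, intervalIntegral.integral_add iA iB,
      intervalIntegral.integral_const_mul, intervalIntegral.integral_const_mul,
      intervalIntegral.integral_const_mul, eF t₁, eF s₁, eH t₁ s₁]
  -- step 2
  have step2 : ∀ s₁ t₁, (∫ s₂ in a..b,
        (γ s₁ s₂ ^ 2 * F t₁ + 2 * γ s₁ s₂ * γ s₂ t₁ * H t₁ s₁ + γ s₂ t₁ ^ 2 * F s₁))
      = (2 * F s₁) * F t₁ + 2 * H s₁ t₁ ^ 2 := by
    intro s₁ t₁
    have e : ∀ s₂, γ s₁ s₂ ^ 2 * F t₁ + 2 * γ s₁ s₂ * γ s₂ t₁ * H t₁ s₁ + γ s₂ t₁ ^ 2 * F s₁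
        = F t₁ * γ s₁ s₂ ^ 2 + (2 * H t₁ s₁) * (γ s₁ s₂ * γ s₂ t₁) + F s₁ * γ t₁ s₂ ^ 2 := by
      intro s₂; rw [hsym s₂ t₁]; ring
    have iA : IntervalIntegrable (fun s₂ => F t₁ * γ s₁ s₂ ^ 2) volume a b :=
      (by fun_prop : Continuous fun s₂ : ℝ => F t₁ * γ s₁ s₂ ^ 2).intervalIntegrable a b
    have iB : IntervalIntegrable (fun s₂ => (2 * H t₁ s₁) * (γ s₁ s₂ * γ s₂ t₁)) volume a b :=
      (by fun_prop :
        Continuous fun s₂ : ℝ => (2 * H t₁ s₁) * (γ s₁ s₂ * γ s₂ t₁)).intervalIntegrable a b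
    have iC : IntervalIntegrable (fun s₂ => F s₁ * γ t₁ s₂ ^ 2) volume a b :=
      (by fun_prop : Continuous fun s₂ : ℝ => F s₁ * γ t₁ s₂ ^ 2).intervalIntegrable a b
    simp_rw [e]
    rw [intervalIntegral.integral_add (iA.add iB) iC, intervalIntegral.integral_add iA iB,
      intervalIntegral.integral_const_mul, intervalIntegral.integral_const_mul,
      intervalIntegral.integral_const_mul, eF s₁, eF t₁, eH s₁ t₁, Hsym t₁ s₁]
    ring
  -- step 3
  have step3 : ∀ s₁, (∫ t₁ in a..b, ((2 * F s₁) * F t₁ + 2 * H s₁ t₁ ^ 2))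
      = T * (2 * F s₁) + 2 * K s₁ := by
    intro s₁
    have iA : IntervalIntegrable (fun t₁ => (2 * F s₁) * F t₁) volume a b :=
      (by fun_prop : Continuous fun t₁ : ℝ => (2 * F s₁) * F t₁).intervalIntegrable a b
    have iB : IntervalIntegrable (fun t₁ => 2 * H s₁ t₁ ^ 2) volume a b := by
      apply Continuous.intervalIntegrable
      have : Continuous fun t₁ : ℝ => H s₁ t₁ :=
        cH.comp (continuous_const.prodMk continuous_id)
      fun_prop
    rw [intervalIntegral.integral_add iA iB, intervalIntegral.integral_const_mul,
      intervalIntegral.integral_const_mul]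
    have : (∫ t₁ in a..b, F t₁) = T := rfl
    rw [this]
    have : (∫ t₁ in a..b, H s₁ t₁ ^ 2) = K s₁ := rfl
    rw [this]
    ring
  simp_rw [step1, step2, step3]
  have iA : IntervalIntegrable (fun s₁ => T * (2 * F s₁)) volume a b :=
    (by fun_prop : Continuous fun s₁ : ℝ => T * (2 * F s₁)).intervalIntegrable a b
  have iB : IntervalIntegrable (fun s₁ => 2 * K s₁) volume a b :=
    (by fun_prop : Continuous fun s₁ : ℝ => 2 * K s₁).intervalIntegrable a b
  rw [intervalIntegral.integral_add iA iB, intervalIntegral.integral_const_mul,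
    intervalIntegral.integral_const_mul, intervalIntegral.integral_const_mul]
  rw [show (∫ s₁ in a..b, F s₁) = T from rfl]
  -- now the RHS quadruple integral
  have r1 : ∀ t u₁ u₂, (∫ u₃ in a..b, γ t u₁ * γ u₁ u₂ * γ u₂ u₃ * γ u₃ t)
      = γ t u₁ * γ u₁ u₂ * H u₂ t := by
    intro t u₁ u₂
    have e : ∀ u₃, γ t u₁ * γ u₁ u₂ * γ u₂ u₃ * γ u₃ t
        = (γ t u₁ * γ u₁ u₂) * (γ u₂ u₃ * γ u₃ t) := fun u₃ => by ring
    simp_rw [e]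
    rw [intervalIntegral.integral_const_mul, eH u₂ t]
  have r2 : ∀ t u₁, (∫ u₂ in a..b, γ t u₁ * γ u₁ u₂ * H u₂ t)
      = γ t u₁ * ∫ u₂ in a..b, γ u₁ u₂ * H u₂ t := by
    intro t u₁
    have e : ∀ u₂, γ t u₁ * γ u₁ u₂ * H u₂ t = γ t u₁ * (γ u₁ u₂ * H u₂ t) :=
      fun u₂ => by ring
    simp_rw [e]
    rw [intervalIntegral.integral_const_mul]
  have r3 : ∀ t, K t = ∫ u₁ in a..b, γ t u₁ * ∫ u₂ in a..b, γ u₁ u₂ * H u₂ t := by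
    intro t
    have cHt : Continuous fun x : ℝ => H t x :=
      cH.comp (continuous_const.prodMk continuous_id)
    have e1 : ∀ t₁, H t t₁ ^ 2 = ∫ u₁ in a..b, γ t u₁ * γ u₁ t₁ * H t t₁ := by
      intro t₁
      rw [sq]
      nth_rewrite 1 [← eH t t₁]
      rw [← intervalIntegral.integral_mul_const]
    have swap : (∫ t₁ in a..b, ∫ u₁ in a..b, γ t u₁ * γ u₁ t₁ * H t t₁)
        = ∫ u₁ in a..b, ∫ t₁ in a..b, γ t u₁ * γ u₁ t₁ * H t t₁ :=
      myswap hle (fun t₁ u₁ => γ t u₁ * γ u₁ t₁ * H t t₁) (by fun_prop)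
    calc K t = ∫ t₁ in a..b, H t t₁ ^ 2 := rfl
      _ = ∫ t₁ in a..b, ∫ u₁ in a..b, γ t u₁ * γ u₁ t₁ * H t t₁ := by simp_rw [e1]
      _ = ∫ u₁ in a..b, ∫ t₁ in a..b, γ t u₁ * γ u₁ t₁ * H t t₁ := swap
      _ = ∫ u₁ in a..b, γ t u₁ * ∫ t₁ in a..b, γ u₁ t₁ * H t t₁ := by
          refine intervalIntegral.integral_congr fun u₁ _ => ?_
          have e2 : ∀ t₁, γ t u₁ * γ u₁ t₁ * H t t₁ = γ t u₁ * (γ u₁ t₁ * H t t₁) :=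
            fun t₁ => by ring
          simp_rw [e2]
          rw [intervalIntegral.integral_const_mul]
      _ = ∫ u₁ in a..b, γ t u₁ * ∫ u₂ in a..b, γ u₁ u₂ * H u₂ t := by
          refine intervalIntegral.integral_congr fun u₁ _ => ?_
          congr 1
          refine intervalIntegral.integral_congr fun u₂ _ => ?_
          rw [Hsym t u₂]
  simp_rw [r1, r2, ← r3]
  ring
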